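/- For each positive integer n, the sum ∑_{d≥1} r_d(2n)/d^2 · (log n + 2γ − 2 log d)^2 converges absolutely and equals ∑_{i+j≤2} c_{i,j} (log n)^i σ_{-1}^{(j)}(2n) for constants c_{i,j} independent of n, with c_{2,0} = 1/ζ(2). -/

import Mathlib

/-- The Ramanujan sum `r_d(n) = ∑_{b mod d, gcd(b,d)=1} e(bn/d)`. -/
noncomputable def ramanujanSum (d n : ℕ) : ℂ :=
  ∑ b ∈ (Finset.range d).filter (fun b => Nat.gcd b d = 1),
    Complex.exp (2 * Real.pi * Complex.I * b * n / d)

/-!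
Sieving the coprimality condition with the Möbius function turns `r_d(m)` into geometric sums
over roots of unity, so that `r_d(m) = ∑_{e ∣ m, e ∣ d} μ(d/e) e`. Substituting `d = e k`, the
series becomes `∑_{e ∣ m} e⁻¹ ∑_k μ(k) (log n + 2γ - 2 log e - 2 log k)² / k²`, and expanding the
square expresses each inner series through the moments `M j = ∑_k μ(k) (log k)^j / k²`. These
converge absolutely because the L-series of `μ` and of its log-twists do on `re s > 1`, and
`M 0 = 1/ζ(2) = 6/π²`. In `ℂ`, unconditional convergence already gives absolute convergence.
-/

open Finset LSeries
open scoped ArithmeticFunction.Moebius LSeries.notation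

local notation "γ" => Real.eulerMascheroniConstant

theorem IsPrimitiveRoot.geom_sum_pow_eq_ite {R : Type*} [CommRing R] [IsDomain R] {ζ : R} {k : ℕ}
    (hζ : IsPrimitiveRoot ζ k) (m : ℕ) :
    ∑ b ∈ range k, (ζ ^ m) ^ b = if k ∣ m then (k : R) else 0 := by
  split_ifs with h
  · simp [(hζ.pow_eq_one_iff_dvd m).2 h]
  · have hk : (ζ ^ m) ^ k = 1 := by rw [← pow_mul, mul_comm, pow_mul, hζ.pow_eq_one, one_pow]
    have hne : ζ ^ m - 1 ≠ 0 := sub_ne_zero_of_ne (mt (hζ.pow_eq_one_iff_dvd m).1 h)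
    exact eq_zero_of_ne_zero_of_mul_left_eq_zero hne (by rw [mul_geom_sum, hk, sub_self])

theorem sum_filter_gcd_eq_one_eq_sum_moebius {M : Type*} [AddCommGroup M] {d : ℕ} (hd : d ≠ 0)
    (s : Finset ℕ) (f : ℕ → M) :
    ∑ b ∈ s with b.gcd d = 1, f b = ∑ t ∈ d.divisors, μ t • ∑ b ∈ s with t ∣ b, f b := by
  have hμ (n : ℕ) : ∑ t ∈ n.divisors, (μ t : ℤ) = if n = 1 then 1 else 0 := by
    rw [← ArithmeticFunction.coe_mul_zeta_apply, ArithmeticFunction.moebius_mul_coe_zeta,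
      ArithmeticFunction.one_apply]
  have hgcd (b : ℕ) : {t ∈ d.divisors | t ∣ b} = (b.gcd d).divisors := by
    rw [← Nat.divisors_filter_dvd_of_dvd hd (Nat.gcd_dvd_right b d)]
    refine filter_congr fun t ht => ?_
    simp [Nat.dvd_gcd_iff, Nat.dvd_of_mem_divisors ht]
  simp_rw [smul_sum, sum_filter (p := fun b => _ ∣ b)]
  rw [sum_comm, sum_filter]
  refine sum_congr rfl fun b _ => ?_
  rw [← sum_filter, hgcd, ← sum_smul, hμ]
  split_ifs <;> simp

theorem sum_range_mul_filter_dvd {M : Type*} [AddCommMonoid M] (f : ℕ → M) {t : ℕ} (ht : t ≠ 0)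
    (q : ℕ) : ∑ b ∈ range (t * q) with t ∣ b, f b = ∑ c ∈ range q, f (t * c) := by
  rw [← sum_image (fun a _ b _ h => Nat.eq_of_mul_eq_mul_left (Nat.pos_of_ne_zero ht) h)]
  congr 1
  ext b
  simp only [mem_filter, mem_range, mem_image]
  constructor
  · rintro ⟨hb, c, rfl⟩
    exact ⟨c, lt_of_mul_lt_mul_left hb (Nat.zero_le t), rfl⟩
  · rintro ⟨c, hc, rfl⟩
    exact ⟨Nat.mul_lt_mul_of_pos_left hc (Nat.pos_of_ne_zero ht), c, rfl⟩

theorem IsPrimitiveRoot.sum_coprime_pow_mul {R : Type*} [CommRing R] [IsDomain R] {ζ : R} {d : ℕ}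
    (hζ : IsPrimitiveRoot ζ d) (hd : d ≠ 0) (m : ℕ) :
    ∑ b ∈ range d with b.gcd d = 1, ζ ^ (b * m) =
      ∑ e ∈ d.divisors, if e ∣ m then (μ (d / e) : R) * e else 0 := by
  rw [sum_filter_gcd_eq_one_eq_sum_moebius hd,
    ← Nat.sum_div_divisors d (fun e => if e ∣ m then (μ (d / e) : R) * e else 0)]
  refine sum_congr rfl fun t ht => ?_
  have htd := Nat.dvd_of_mem_divisors ht
  have ht0 : t ≠ 0 := ne_zero_of_dvd_ne_zero hd htd
  have hrange : range d = range (t * (d / t)) := by rw [Nat.mul_div_cancel' htd]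
  rw [hrange, sum_range_mul_filter_dvd _ ht0, Nat.div_div_self htd hd, zsmul_eq_mul]
  simp_rw [show ∀ c, ζ ^ (t * c * m) = ((ζ ^ t) ^ m) ^ c by intro c; ring]
  rw [(hζ.pow_of_dvd ht0 htd).geom_sum_pow_eq_ite m]
  split_ifs <;> simp

theorem ramanujanSum_eq_sum_divisors {m : ℕ} (hm : m ≠ 0) (d : ℕ) :
    ramanujanSum d m = ∑ e ∈ m.divisors, if e ∣ d then (μ (d / e) : ℂ) * e else 0 := by
  rcases eq_or_ne d 0 with rfl | hd
  · simp [ramanujanSum]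
  have hexp (b : ℕ) : Complex.exp (2 * Real.pi * Complex.I * b * m / d) =
      Complex.exp (2 * Real.pi * Complex.I / d) ^ (b * m) := by
    rw [← Complex.exp_nat_mul]; push_cast; ring_nf
  simp_rw [ramanujanSum, hexp, (Complex.isPrimitiveRoot_exp d hd).sum_coprime_pow_mul hd,
    ← sum_filter]
  congr 1
  ext e
  simp only [mem_filter, Nat.mem_divisors]
  tauto

theorem LSeries.logMul_iterate_apply (f : ℕ → ℂ) (j n : ℕ) :
    logMul^[j] f n = Complex.log n ^ j * f n := by
  induction j with
  | zero => simp
  | succ j ih => rw [Function.iterate_succ_apply', logMul, ih, pow_succ]; ring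

theorem term_logMul_iterate_moebius (j n : ℕ) :
    term (logMul^[j] ↗μ) 2 n = ((μ n * Real.log n ^ j / n ^ 2 : ℝ) : ℂ) := by
  rcases eq_or_ne n 0 with rfl | hn
  · simp
  rw [term_of_ne_zero hn, logMul_iterate_apply, Complex.cpow_ofNat]
  push_cast
  ring

/-- By `ofReal_moebiusLogMoment` and `LSeries_iteratedDeriv`, `moebiusLogMoment j` is
`(-1) ^ j` times the `j`-th derivative of `1 / ζ` at `2`. -/
noncomputable def moebiusLogMoment (j : ℕ) : ℝ :=
  ∑' n : ℕ, μ n * Real.log n ^ j / n ^ 2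

theorem hasSum_moebiusLogMoment (j : ℕ) :
    HasSum (fun n : ℕ => μ n * Real.log n ^ j / n ^ 2) (moebiusLogMoment j) := by
  have h : LSeriesSummable (logMul^[j] ↗μ) 2 := by
    refine LSeriesSummable_of_abscissaOfAbsConv_lt_re ?_
    rw [absicssaOfAbsConv_logPowMul, ArithmeticFunction.abscissaOfAbsConv_moebius]
    exact_mod_cast (by norm_num : (1 : ℝ) < 2)
  rw [LSeriesSummable, funext (term_logMul_iterate_moebius j)] at h
  exact (Complex.summable_ofReal.mp h).hasSum

theorem ofReal_moebiusLogMoment (j : ℕ) :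
    (moebiusLogMoment j : ℂ) = LSeries (logMul^[j] ↗μ) 2 := by
  simp_rw [LSeries, term_logMul_iterate_moebius, moebiusLogMoment, Complex.ofReal_tsum]

theorem moebiusLogMoment_zero : moebiusLogMoment 0 = 6 / Real.pi ^ 2 := by
  have hζ := ArithmeticFunction.LSeries_zeta_mul_Lseries_moebius (s := 2) (by norm_num)
  rw [ArithmeticFunction.LSeries_zeta_eq_riemannZeta (by norm_num), riemannZeta_two] at hζ
  have hπ : (Real.pi : ℂ) ^ 2 ≠ 0 := by simp [Real.pi_ne_zero]
  apply Complex.ofReal_injective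
  rw [ofReal_moebiusLogMoment, Function.iterate_zero, id]
  push_cast
  field_simp
  linear_combination 6 * hζ

theorem hasSum_moebius_mul_sub_two_log_sq (A : ℝ) :
    HasSum (fun n : ℕ => μ n * (A - 2 * Real.log n) ^ 2 / n ^ 2)
      (A ^ 2 * moebiusLogMoment 0 - 4 * A * moebiusLogMoment 1 + 4 * moebiusLogMoment 2) := by
  refine ((((hasSum_moebiusLogMoment 0).mul_left (A ^ 2)).sub
    ((hasSum_moebiusLogMoment 1).mul_left (4 * A))).add
    ((hasSum_moebiusLogMoment 2).mul_left 4)).congr_fun fun n => ?_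
  ring

theorem hasSum_sum_divisors_moebius_mul {R : Type*} [CommRing R] [TopologicalSpace R]
    [IsTopologicalRing R] (m : ℕ) (g S : ℕ → R)
    (hS : ∀ e ∈ m.divisors, HasSum (fun k => μ k * g (e * k)) (S e)) :
    HasSum (fun d => (∑ e ∈ m.divisors, if e ∣ d then (μ (d / e) : R) * e else 0) * g d)
      (∑ e ∈ m.divisors, e * S e) := by
  simp_rw [sum_mul, ite_mul, zero_mul]
  refine hasSum_sum fun e he => ?_
  have he0 : e ≠ 0 := (Nat.pos_of_mem_divisors he).ne'
  refine ((mul_right_injective₀ he0).hasSum_iff fun d hd => ?_).mp ?_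
  · rw [if_neg fun ⟨k, hk⟩ => hd ⟨k, hk.symm⟩]
  · refine ((hS e he).mul_left (e : R)).congr_fun fun k => ?_
    simp only [Function.comp_apply, dvd_mul_right, ↓reduceIte,
      Nat.mul_div_cancel_left k (Nat.pos_of_ne_zero he0)]
    ring

theorem hasSum_sum_divisors_moebius_mul_log_sq (m : ℕ) (ℓ : ℝ) :
    HasSum (fun d : ℕ => (∑ e ∈ m.divisors, if e ∣ d then (μ (d / e) : ℝ) * e else 0) *
        ((ℓ - 2 * Real.log d) ^ 2 / d ^ 2))
      (∑ e ∈ m.divisors, ((ℓ - 2 * Real.log e) ^ 2 * moebiusLogMoment 0 -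
        4 * (ℓ - 2 * Real.log e) * moebiusLogMoment 1 + 4 * moebiusLogMoment 2) / e) := by
  set Q : ℝ → ℝ := fun A =>
    A ^ 2 * moebiusLogMoment 0 - 4 * A * moebiusLogMoment 1 + 4 * moebiusLogMoment 2
  have hS (e : ℕ) (he : e ∈ m.divisors) : HasSum
      (fun k : ℕ => μ k * ((ℓ - 2 * Real.log ↑(e * k)) ^ 2 / ↑(e * k) ^ 2))
      (Q (ℓ - 2 * Real.log e) / e ^ 2) := by
    have he0 : (e : ℝ) ≠ 0 := Nat.cast_ne_zero.mpr (Nat.pos_of_mem_divisors he).ne'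
    refine ((hasSum_moebius_mul_sub_two_log_sq _).div_const _).congr_fun fun k => ?_
    rcases eq_or_ne k 0 with rfl | hk
    · simp
    have hk0 : (k : ℝ) ≠ 0 := Nat.cast_ne_zero.mpr hk
    rw [Nat.cast_mul, Real.log_mul he0 hk0]
    field_simp
    ring
  have key := hasSum_sum_divisors_moebius_mul m (fun d : ℕ => (ℓ - 2 * Real.log d) ^ 2 / d ^ 2)
    (fun e : ℕ => Q (ℓ - 2 * Real.log e) / e ^ 2) hS
  have hval (e : ℕ) (he : e ∈ m.divisors) :
      (e : ℝ) * (Q (ℓ - 2 * Real.log e) / e ^ 2) = Q (ℓ - 2 * Real.log e) / e := by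
    have he0 : (e : ℝ) ≠ 0 := Nat.cast_ne_zero.mpr (Nat.pos_of_mem_divisors he).ne'
    field_simp
  rw [sum_congr rfl hval] at key
  exact key

theorem hasSum_ramanujanSum_div_sq_mul_log_sq {m : ℕ} (hm : m ≠ 0) (ℓ : ℝ) :
    HasSum (fun d : ℕ => ramanujanSum d m / (d : ℂ) ^ 2 * ((ℓ - 2 * Real.log d : ℝ) : ℂ) ^ 2)
      ((∑ e ∈ m.divisors, ((ℓ - 2 * Real.log e) ^ 2 * moebiusLogMoment 0 -
        4 * (ℓ - 2 * Real.log e) * moebiusLogMoment 1 + 4 * moebiusLogMoment 2) / e : ℝ) : ℂ) := by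
  refine (Complex.hasSum_ofReal.mpr
    (hasSum_sum_divisors_moebius_mul_log_sq m ℓ)).congr_fun fun d => ?_
  rw [ramanujanSum_eq_sum_divisors hm]
  push_cast [apply_ite ((↑) : ℝ → ℂ)]
  ring

noncomputable def logSqCoeff : ℕ → ℕ → ℝ
  | 0, 0 => 4 * γ ^ 2 * moebiusLogMoment 0 - 8 * γ * moebiusLogMoment 1 + 4 * moebiusLogMoment 2
  | 0, 1 => 8 * moebiusLogMoment 1 - 8 * γ * moebiusLogMoment 0
  | 0, 2 => 4 * moebiusLogMoment 0
  | 1, 0 => 4 * γ * moebiusLogMoment 0 - 4 * moebiusLogMoment 1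
  | 1, 1 => -4 * moebiusLogMoment 0
  | 2, 0 => moebiusLogMoment 0
  | _, _ => 0

theorem sum_logSqCoeff_mul (m : ℕ) (x : ℝ) :
    ∑ p ∈ (range 3 ×ˢ range 3).filter (fun p => p.1 + p.2 ≤ 2),
        logSqCoeff p.1 p.2 * x ^ p.1 * ∑ e ∈ m.divisors, Real.log e ^ p.2 / e =
      ∑ e ∈ m.divisors, ((x + 2 * γ - 2 * Real.log e) ^ 2 * moebiusLogMoment 0 -
        4 * (x + 2 * γ - 2 * Real.log e) * moebiusLogMoment 1 + 4 * moebiusLogMoment 2) / e := by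
  simp_rw [mul_sum]
  rw [sum_comm]
  refine sum_congr rfl fun e _ => ?_
  simp only [sum_filter, sum_product, sum_range_succ, range_one, sum_singleton, Nat.reduceAdd,
    Nat.reduceLeDiff, ↓reduceIte, logSqCoeff]
  ring

/-- There exist constants `c_{i,j}` (with `c_{2,0} = 1/ζ(2) = 6/π²`) such that for every `n ≥ 1`
the series `∑_{d ≥ 1} r_d(2n)/d² (log n + 2γ − 2 log d)²` converges absolutely and equals
`∑_{i+j ≤ 2} c_{i,j} (log n)^i σ_{-1}^{(j)}(2n)`. -/
theorem stmt2 :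
    ∃ c : ℕ → ℕ → ℝ, c 2 0 = 6 / Real.pi ^ 2 ∧
      ∀ n : ℕ, 0 < n →
        Summable (fun d : ℕ => ‖ramanujanSum (d + 1) (2 * n) / ((d + 1 : ℂ)) ^ 2 *
          (((Real.log n + 2 * Real.eulerMascheroniConstant - 2 * Real.log (d + 1) : ℝ) : ℂ)) ^ 2‖) ∧
        HasSum (fun d : ℕ => ramanujanSum (d + 1) (2 * n) / ((d + 1 : ℂ)) ^ 2 *
          (((Real.log n + 2 * Real.eulerMascheroniConstant - 2 * Real.log (d + 1) : ℝ) : ℂ)) ^ 2)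
          (((∑ p ∈ (Finset.range 3 ×ˢ Finset.range 3).filter (fun p => p.1 + p.2 ≤ 2),
            c p.1 p.2 * (Real.log n) ^ p.1 *
              ∑ e ∈ (2 * n).divisors, (Real.log e) ^ p.2 / e : ℝ)) : ℂ) := by
  refine ⟨logSqCoeff, moebiusLogMoment_zero, fun n hn => ?_⟩
  have key := hasSum_ramanujanSum_div_sq_mul_log_sq (m := 2 * n) (by omega) (Real.log n + 2 * γ)
  rw [← sum_logSqCoeff_mul] at key
  have h := (hasSum_nat_add_iff' 1).mpr key
  have h0 : ramanujanSum 0 (2 * n) = 0 := by simp [ramanujanSum]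
  simp only [range_one, sum_singleton, h0, zero_div, zero_mul, sub_zero, Nat.cast_add,
    Nat.cast_one] at h
  exact ⟨summable_norm_iff.mpr h.summable, h⟩
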